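/- arXiv:2411.09832 — 2 statements merged into one kernel-verified Lean document; each statement's English description precedes it below -/
import Mathlib

section
/- Let 𝕀 be an interval hypergraph on [n] that is closed under intersection and let A_1, …, A_q be acyclic orientations of 𝕀. Define the orientation O of 𝕀 by O(I) = min( I ∖ ⋃_{p ∈ [q]} ⋃ { [min(J), A_p(J)) : J ∈ 𝕀, A_p(J) ∈ I } ) for each I ∈ 𝕀, where [min(J), A_p(J)) = {min(J), …, A_p(J) - 1}. Then O is acyclic and O is the least upper bound of {A_1, …, A_q} in the hypergraphic poset P_𝕀. -/
/-!
The join `O` is acyclic: on a cycle of `O`, start at an edge of least value `x`; in the previous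
edge, `x` is blocked by some interval `[min J, A_p J)`, and then every edge of the cycle lies
strictly below `A_p J`, including the previous edge, which contains it. `O` dominates every `A_p`
pointwise, and closure under intersection shows that any acyclic orientation dominating all `A_p`
pointwise dominates `O`. It remains to see that `A ≤ B` pointwise implies `A ≤ B` in `P_𝕀` for
acyclic `A`, `B`. Take the edge `H₁` with `A H₁ ≠ B H₁` and `(A H₁, B H₁)` lexicographically
largest. Joining `A` with the orientation that sends each edge `J ∋ B H₁` with `min J ≥ min H₁`
to `B H₁` performs a single increasing flip `A H₁ → B H₁` and stays below `B`; induct on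
`∑ (B H - A H)`.
-/

namespace IHL

/-- The hyperedges of a hypergraph, as a subtype. -/
abbrev Edge (𝕀 : Finset (Finset ℕ)) : Type := {H : Finset ℕ // H ∈ 𝕀}

/-- `ℋ` is a hypergraph on `[n] = {1,…,n}`: hyperedges are nonempty subsets of `[n]`
and all singletons belong to `ℋ`. -/
def IsHypergraph (n : ℕ) (ℋ : Finset (Finset ℕ)) : Prop :=
  (∀ H ∈ ℋ, H.Nonempty ∧ H ⊆ Finset.Icc 1 n) ∧
    ∀ i, 1 ≤ i → i ≤ n → ({i} : Finset ℕ) ∈ ℋ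

/-- `𝕀` is an interval hypergraph on `[n]`: hyperedges are intervals `[a,b] ⊆ [n]`
and all singletons belong to `𝕀`. -/
def IsIntervalHypergraph (n : ℕ) (𝕀 : Finset (Finset ℕ)) : Prop :=
  (∀ H ∈ 𝕀, ∃ a b, 1 ≤ a ∧ a ≤ b ∧ b ≤ n ∧ H = Finset.Icc a b) ∧
    ∀ i, 1 ≤ i → i ≤ n → ({i} : Finset ℕ) ∈ 𝕀

/-- An orientation assigns to each hyperedge one of its elements. -/
def IsOrientation (𝕀 : Finset (Finset ℕ)) (O : Edge 𝕀 → ℕ) : Prop :=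
  ∀ H : Edge 𝕀, O H ∈ H.1

/-- Acyclicity: there is no cyclic sequence `H_0, …, H_k` with `k ≥ 2`, `H_k = H_0`, and
`O (H (p+1)) ∈ H p \ {O (H p)}` for all `p < k`. -/
def IsAcyclic (𝕀 : Finset (Finset ℕ)) (O : Edge 𝕀 → ℕ) : Prop :=
  ¬∃ (k : ℕ) (H : ℕ → Edge 𝕀), 2 ≤ k ∧ H k = H 0 ∧
    ∀ p < k, O (H (p + 1)) ∈ (H p).1 ∧ O (H (p + 1)) ≠ O (H p)

/-- An acyclic orientation, i.e. an element of the hypergraphic poset. -/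
def AcycOr (𝕀 : Finset (Finset ℕ)) (O : Edge 𝕀 → ℕ) : Prop :=
  IsOrientation 𝕀 O ∧ IsAcyclic 𝕀 O

/-- Increasing flip from `O` to `O'` flipping `i` to `j`. -/
def IsIncFlip (n : ℕ) (𝕀 : Finset (Finset ℕ)) (i j : ℕ) (O O' : Edge 𝕀 → ℕ) : Prop :=
  O ≠ O' ∧ 1 ≤ i ∧ i < j ∧ j ≤ n ∧
    ∀ H : Edge 𝕀,
      (O H ≠ O' H → O H = i ∧ O' H = j) ∧
      (i ∈ H.1 → j ∈ H.1 → (O H = i ↔ O' H = j))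

/-- One increasing flip step between acyclic orientations. -/
def FlipStep (n : ℕ) (𝕀 : Finset (Finset ℕ)) (O O' : Edge 𝕀 → ℕ) : Prop :=
  AcycOr 𝕀 O ∧ AcycOr 𝕀 O' ∧ ∃ i j, IsIncFlip n 𝕀 i j O O'

/-- The order of the hypergraphic poset `P_𝕀`: reflexive-transitive closure of
the increasing flip relation on acyclic orientations. -/
def leP (n : ℕ) (𝕀 : Finset (Finset ℕ)) : (Edge 𝕀 → ℕ) → (Edge 𝕀 → ℕ) → Prop :=
  Relation.ReflTransGen (FlipStep n 𝕀)

/-- Strict order of the hypergraphic poset. -/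
def ltP (n : ℕ) (𝕀 : Finset (Finset ℕ)) (A B : Edge 𝕀 → ℕ) : Prop :=
  leP n 𝕀 A B ∧ A ≠ B

/-- `B` covers `A` in `P_𝕀`. -/
def CoversP (n : ℕ) (𝕀 : Finset (Finset ℕ)) (A B : Edge 𝕀 → ℕ) : Prop :=
  ltP n 𝕀 A B ∧ ¬∃ C, AcycOr 𝕀 C ∧ ltP n 𝕀 A C ∧ ltP n 𝕀 C B

/-- `𝕀` is closed under intersection. -/
def ClosedUnderIntersection (𝕀 : Finset (Finset ℕ)) : Prop :=
  ∀ I ∈ 𝕀, ∀ J ∈ 𝕀, (I ∩ J).Nonempty → I ∩ J ∈ 𝕀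

/-- `π` is a permutation of `[n]` (it fixes everything outside `[1,n]`). -/
def IsPermOn (n : ℕ) (π : Equiv.Perm ℕ) : Prop :=
  ∀ x, x ∉ Finset.Icc 1 n → π x = x

/-- The surjection `Or` from permutations to acyclic orientations:
`Or_π (H) = π (min {p : π p ∈ H})`. -/
noncomputable def orMap (𝕀 : Finset (Finset ℕ)) (π : Equiv.Perm ℕ) : Edge 𝕀 → ℕ :=
  fun H => π (sInf {p | π p ∈ H.1})

/-- The weak order on permutations of `[n]`, via inclusion of inversion sets. -/
def weakLe (n : ℕ) (σ τ : Equiv.Perm ℕ) : Prop :=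
  ∀ a b, 1 ≤ a → a < b → b ≤ n → σ.symm b < σ.symm a → τ.symm b < τ.symm a

/-- `π` contains the pattern 231. -/
def Contains231 (n : ℕ) (π : Equiv.Perm ℕ) : Prop :=
  ∃ p q r, 1 ≤ p ∧ p < q ∧ q < r ∧ r ≤ n ∧ π r < π p ∧ π p < π q

/-- `π` contains the pattern 213. -/
def Contains213 (n : ℕ) (π : Equiv.Perm ℕ) : Prop :=
  ∃ p q r, 1 ≤ p ∧ p < q ∧ q < r ∧ r ≤ n ∧ π q < π p ∧ π p < π r

/-- The partial order `≺_A`: transitive closure of `A H ≺ h` for `h ∈ H \ {A H}`. -/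
def prec (𝕀 : Finset (Finset ℕ)) (A : Edge 𝕀 → ℕ) : ℕ → ℕ → Prop :=
  Relation.TransGen fun a b => ∃ H : Edge 𝕀, A H = a ∧ b ∈ H.1 ∧ b ≠ a

/-- The distributivity condition on interval hypergraphs: for all `I, J ∈ 𝕀` with
`I ⊈ J`, `J ⊈ I` and `I ∩ J ≠ ∅`, the intersection `I ∩ J` is in `𝕀` and is initial
or final in any `K ∈ 𝕀` containing it. -/
def IsDistribHG (𝕀 : Finset (Finset ℕ)) : Prop :=
  ∀ I ∈ 𝕀, ∀ J ∈ 𝕀, ¬I ⊆ J → ¬J ⊆ I → (I ∩ J).Nonempty →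
    (I ∩ J ∈ 𝕀 ∧ ∀ K ∈ 𝕀, I ∩ J ⊆ K → ((I ∩ J).min = K.min ∨ (I ∩ J).max = K.max))

/-- `j ∈ 𝒥_𝕀 = ⋃_{I ∈ 𝕀} (I \ {min I})`. -/
def InJI (𝕀 : Finset (Finset ℕ)) (j : ℕ) : Prop :=
  ∃ I ∈ 𝕀, j ∈ I ∧ ∃ y ∈ I, y < j

/-- `Jj` is the interval `J_j = ⋂ {I ∈ 𝕀 : j ∈ I \ {min I}}`. -/
def IsJj (𝕀 : Finset (Finset ℕ)) (j : ℕ) (Jj : Finset ℕ) : Prop :=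
  ∀ x, x ∈ Jj ↔ ∀ I ∈ 𝕀, j ∈ I → (∃ y ∈ I, y < j) → x ∈ I

/-- `Aj` is the orientation `A_j` (where `μj = min J_j`):
`A_j (J) = j` if `j ∈ J` and `min J = μ_j`, and `A_j (J) = min J` otherwise. -/
def IsAj (𝕀 : Finset (Finset ℕ)) (j μj : ℕ) (Aj : Edge 𝕀 → ℕ) : Prop :=
  ∀ J : Edge 𝕀,
    (j ∈ J.1 ∧ IsLeast (J.1 : Set ℕ) μj → Aj J = j) ∧
    (¬(j ∈ J.1 ∧ IsLeast (J.1 : Set ℕ) μj) → IsLeast (J.1 : Set ℕ) (Aj J))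

/-- `Jij` is the interval `J_{ij} = ⋂ {I ∈ 𝕀 : {i,j} ⊆ I}`. -/
def IsJij (𝕀 : Finset (Finset ℕ)) (i j : ℕ) (Jij : Finset ℕ) : Prop :=
  ∀ x, x ∈ Jij ↔ ∀ I ∈ 𝕀, i ∈ I → j ∈ I → x ∈ I

/-- `(i,j) ∈ ℐ𝒥_𝕀`, where `μij = min J_{ij}`: both lie in a common hyperedge and
`i = max ([μ_{ij}, j) \ ⋃ {J \ {min J} : J ∈ 𝕀, J ⊆ [μ_{ij}, j)})`. -/
def InIJ (n : ℕ) (𝕀 : Finset (Finset ℕ)) (i j μij : ℕ) : Prop :=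
  1 ≤ i ∧ i < j ∧ j ≤ n ∧ (∃ I ∈ 𝕀, i ∈ I ∧ j ∈ I) ∧
    IsGreatest {m | μij ≤ m ∧ m < j ∧
      ∀ J ∈ 𝕀, (∀ x ∈ J, μij ≤ x ∧ x < j) → m ∈ J → ∀ y ∈ J, m ≤ y} i

/-- `Aij` is the orientation `A_{ij}` (where `μij = min J_{ij}`):
`A_{ij} (J) = j` if `j ∈ J` and `min J ≥ μ_{ij}`, and `A_{ij} (J) = min J` otherwise. -/
def IsAij (𝕀 : Finset (Finset ℕ)) (j μij : ℕ) (Aij : Edge 𝕀 → ℕ) : Prop :=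
  ∀ J : Edge 𝕀,
    (j ∈ J.1 ∧ (∀ x ∈ J.1, μij ≤ x) → Aij J = j) ∧
    (¬(j ∈ J.1 ∧ (∀ x ∈ J.1, μij ≤ x)) → IsLeast (J.1 : Set ℕ) (Aij J))

/-- The reversal `x ↦ n - x + 1` on `[n]`. -/
def revPt (n x : ℕ) : ℕ := n - x + 1

/-- The reversed hypergraph `ℋ↔`. -/
def revHG (n : ℕ) (ℋ : Finset (Finset ℕ)) : Finset (Finset ℕ) :=
  ℋ.image fun H => H.image (revPt n)

section Interval

variable {n : ℕ} {𝕀 : Finset (Finset ℕ)}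

lemma IsIntervalHypergraph.nonempty (h𝕀 : IsIntervalHypergraph n 𝕀) (H : Edge 𝕀) :
    H.1.Nonempty := by
  obtain ⟨a, b, -, hab, -, hH⟩ := h𝕀.1 H.1 H.2
  exact hH ▸ Finset.nonempty_Icc.mpr hab

lemma IsIntervalHypergraph.subset_Icc (h𝕀 : IsIntervalHypergraph n 𝕀) (H : Edge 𝕀) :
    H.1 ⊆ Finset.Icc 1 n := by
  obtain ⟨a, b, h1, -, hbn, hH⟩ := h𝕀.1 H.1 H.2
  exact hH ▸ Finset.Icc_subset_Icc h1 hbn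

lemma IsIntervalHypergraph.mem_of_le_of_le (h𝕀 : IsIntervalHypergraph n 𝕀) (H : Edge 𝕀)
    {x y z : ℕ} (hx : x ∈ H.1) (hy : y ∈ H.1) (hxz : x ≤ z) (hzy : z ≤ y) : z ∈ H.1 := by
  obtain ⟨a, b, -, -, -, hH⟩ := h𝕀.1 H.1 H.2
  simp only [hH, Finset.mem_Icc] at hx hy ⊢
  omega

lemma IsIntervalHypergraph.lt_of_not_mem (h𝕀 : IsIntervalHypergraph n 𝕀) (H : Edge 𝕀)
    {x v : ℕ} (hx : x ∈ H.1) (hv : v ∉ H.1) (hxv : x < v) {z : ℕ} (hz : z ∈ H.1) : z < v := by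
  by_contra! hvz
  exact hv (h𝕀.mem_of_le_of_le H hx hz hxv.le hvz)

def ClosedUnderIntersection.inter (hcl : ClosedUnderIntersection 𝕀) (I J : Edge 𝕀)
    (h : (I.1 ∩ J.1).Nonempty) : Edge 𝕀 :=
  ⟨I.1 ∩ J.1, hcl I.1 I.2 J.1 J.2 h⟩

end Interval

section Acyclic

variable {𝕀 : Finset (Finset ℕ)} {O : Edge 𝕀 → ℕ}

lemma IsAcyclic.eq_of_mem (hO : IsAcyclic 𝕀 O) {I J : Edge 𝕀} (hJI : O J ∈ I.1)
    (hIJ : O I ∈ J.1) : O J = O I := by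
  by_contra hne
  refine hO ⟨2, fun p => if p = 1 then J else I, le_rfl, rfl, fun p hp => ?_⟩
  interval_cases p
  · simpa using ⟨hJI, hne⟩
  · simpa using ⟨hIJ, Ne.symm hne⟩

lemma AcycOr.eq_of_subset (hO : AcycOr 𝕀 O) {K I : Edge 𝕀} (hKI : K.1 ⊆ I.1)
    (hIK : O I ∈ K.1) : O K = O I :=
  (hO.2.eq_of_mem hIK (hKI (hO.1 K))).symm

/-- A cycle can be extended periodically and then started at an edge of least orientation. -/
lemma isAcyclic_of_periodic
    (h : ∀ (k : ℕ) (G : ℕ → Edge 𝕀), 0 < k → G k = G 0 → (∀ p, O (G 0) ≤ O (G p)) →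
      (∀ p, O (G (p + 1)) ∈ (G p).1 ∧ O (G (p + 1)) ≠ O (G p)) → False) :
    IsAcyclic 𝕀 O := by
  rintro ⟨k, H, hk, hk0, hcyc⟩
  have hpos : 0 < k := by omega
  have hsucc : ∀ p, H ((p + 1) % k) = H (p % k + 1) := by
    intro p
    rw [Nat.add_mod, Nat.mod_eq_of_lt (by omega : 1 < k)]
    rcases Nat.lt_or_ge (p % k + 1) k with hlt | hge
    · rw [Nat.mod_eq_of_lt hlt]
    · rw [show p % k + 1 = k by have := Nat.mod_lt p hpos; omega, Nat.mod_self, hk0]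
  obtain ⟨m, hm, hmin⟩ := (Finset.range k).exists_min_image (fun p => O (H p))
    ⟨0, Finset.mem_range.mpr hpos⟩
  have hm' : m % k = m := Nat.mod_eq_of_lt (Finset.mem_range.mp hm)
  refine h k (fun p => H ((m + p) % k)) hpos (by simp [hm']) (fun p => ?_) (fun p => ?_)
  · simpa [hm'] using hmin _ (Finset.mem_range.mpr (Nat.mod_lt (m + p) hpos))
  · simpa only [← add_assoc, hsucc] using hcyc _ (Nat.mod_lt (m + p) hpos)

lemma isAcyclic_of_rank (r : ℕ → ℕ) (hr : ∀ H : Edge 𝕀, ∀ h ∈ H.1, h ≠ O H → r (O H) < r h) :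
    IsAcyclic 𝕀 O :=
  isAcyclic_of_periodic fun k G hk hG _ hstep => by
    have hmono : StrictMono fun p => r (O (G p)) :=
      strictMono_nat_of_lt_succ fun p => hr _ _ (hstep p).1 (hstep p).2
    simpa [hG] using hmono hk

end Acyclic

section Join

variable {n : ℕ} {𝕀 : Finset (Finset ℕ)} {ι : Type*}

/-- `m ∈ [min J, a J)`. -/
def Blocks (a : Edge 𝕀 → ℕ) (m : ℕ) (J : Edge 𝕀) : Prop :=
  (∃ x ∈ J.1, x ≤ m) ∧ m < a J

def joinSet (f : ι → Edge 𝕀 → ℕ) (H : Edge 𝕀) : Set ℕ :=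
  {m | m ∈ H.1 ∧ ∀ p J, f p J ∈ H.1 → ¬Blocks (f p) m J}

noncomputable def join (f : ι → Edge 𝕀 → ℕ) (H : Edge 𝕀) : ℕ :=
  sInf (joinSet f H)

lemma join_isLeast (h𝕀 : IsIntervalHypergraph n 𝕀) (f : ι → Edge 𝕀 → ℕ) (H : Edge 𝕀) :
    IsLeast (joinSet f H) (join f H) := by
  have hmax : H.1.max' (h𝕀.nonempty H) ∈ joinSet f H := by
    refine ⟨H.1.max'_mem _, fun p J hJ hblock => ?_⟩
    have := H.1.le_max' _ hJ
    exact absurd hblock.2 (by omega)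
  exact ⟨Nat.sInf_mem ⟨_, hmax⟩, fun _ hm => Nat.sInf_le hm⟩

lemma join_mem (h𝕀 : IsIntervalHypergraph n 𝕀) (f : ι → Edge 𝕀 → ℕ) (H : Edge 𝕀) :
    join f H ∈ H.1 :=
  (join_isLeast h𝕀 f H).1.1

lemma not_blocks_join (h𝕀 : IsIntervalHypergraph n 𝕀) (f : ι → Edge 𝕀 → ℕ) {H J : Edge 𝕀}
    (p : ι) (hJ : f p J ∈ H.1) : ¬Blocks (f p) (join f H) J :=
  (join_isLeast h𝕀 f H).1.2 p J hJ

lemma le_join (h𝕀 : IsIntervalHypergraph n 𝕀) {f : ι → Edge 𝕀 → ℕ} (p : ι)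
    (hf : IsOrientation 𝕀 (f p)) (H : Edge 𝕀) : f p H ≤ join f H := by
  by_contra! hlt
  exact not_blocks_join h𝕀 f p (hf H) ⟨⟨_, join_mem h𝕀 f H, le_rfl⟩, hlt⟩

lemma exists_blocks_of_lt_join {f : ι → Edge 𝕀 → ℕ} {H : Edge 𝕀} {x : ℕ} (hx : x ∈ H.1)
    (hlt : x < join f H) : ∃ p J, f p J ∈ H.1 ∧ Blocks (f p) x J := by
  by_contra! h
  exact (Nat.sInf_le ⟨hx, h⟩ : join f H ≤ x).not_gt hlt

/-- The value of the join on a cycle with least value `x` is blocked by some `v = f p J` in the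
previous edge; `v` then lies above every edge of the cycle, in particular above itself. -/
lemma join_isAcyclic (h𝕀 : IsIntervalHypergraph n 𝕀) (f : ι → Edge 𝕀 → ℕ) :
    IsAcyclic 𝕀 (join f) := by
  refine isAcyclic_of_periodic fun k G hk hGk hmin hstep => ?_
  set x := join f (G 0)
  obtain ⟨hxmem, hxne⟩ : x ∈ (G (k - 1)).1 ∧ x ≠ join f (G (k - 1)) := by
    simpa [Nat.sub_add_cancel hk, hGk] using hstep (k - 1)
  obtain ⟨p, J, hv, ⟨z, hzJ, hzx⟩, hxv⟩ :=
    exists_blocks_of_lt_join hxmem (lt_of_le_of_ne (hmin _) hxne)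
  have below : ∀ E : Edge 𝕀, x ≤ join f E → join f E < f p J → ∀ y ∈ E.1, y < f p J :=
    fun E hxE hEv _ hy => h𝕀.lt_of_not_mem E (join_mem h𝕀 f E)
      (fun hvE => not_blocks_join h𝕀 f p hvE ⟨⟨z, hzJ, hzx.trans hxE⟩, hEv⟩) hEv hy
  have hcycle : ∀ t, ∀ y ∈ (G t).1, y < f p J := by
    intro t
    induction t with
    | zero => exact below _ le_rfl hxv
    | succ t ih => exact below _ (hmin _) (ih _ (hstep t).1)
  exact lt_irrefl _ (hcycle _ _ hv)

lemma AcycOr.not_blocks_self (h𝕀 : IsIntervalHypergraph n 𝕀) {A : Edge 𝕀 → ℕ}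
    (hA : AcycOr 𝕀 A) {I J : Edge 𝕀} (hJI : A J ∈ I.1) : ¬Blocks A (A I) J := by
  rintro ⟨⟨z, hzJ, hz⟩, hlt⟩
  exact hlt.ne' (hA.2.eq_of_mem hJI (h𝕀.mem_of_le_of_le J hzJ (hA.1 J) hz hlt.le))

/-- An upper bound `C` is never blocked: `C H` lies in the edge `H ∩ J`, on which `f p` must
agree with both `f p J` and (being at most `C H`) stay below it. -/
lemma join_le (h𝕀 : IsIntervalHypergraph n 𝕀) (hcl : ClosedUnderIntersection 𝕀)
    {f : ι → Edge 𝕀 → ℕ} (hf : ∀ p, AcycOr 𝕀 (f p)) {C : Edge 𝕀 → ℕ} (hC : AcycOr 𝕀 C)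
    (hle : ∀ p H, f p H ≤ C H) (H : Edge 𝕀) : join f H ≤ C H := by
  refine Nat.sInf_le ⟨hC.1 H, ?_⟩
  rintro p J hJ ⟨⟨z, hzJ, hzC⟩, hCJ⟩
  have hCHJ : C H ∈ J.1 := h𝕀.mem_of_le_of_le J hzJ ((hf p).1 J) hzC hCJ.le
  set K := hcl.inter H J ⟨C H, Finset.mem_inter.mpr ⟨hC.1 H, hCHJ⟩⟩
  have hCK : C K = C H :=
    hC.eq_of_subset Finset.inter_subset_left (Finset.mem_inter.mpr ⟨hC.1 H, hCHJ⟩)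
  have hfK : f p K = f p J :=
    (hf p).eq_of_subset Finset.inter_subset_right (Finset.mem_inter.mpr ⟨hJ, (hf p).1 J⟩)
  have := hle p K
  omega

end Join

section Flip

variable {n : ℕ} {𝕀 : Finset (Finset ℕ)}

/-- The orientation `A_{ij}` of the paper, with `μ` in place of `min J_{ij}`. -/
noncomputable def raiseTo (μ j : ℕ) (J : Edge 𝕀) : ℕ :=
  if j ∈ J.1 ∧ ∀ x ∈ J.1, μ ≤ x then j else sInf (J.1 : Set ℕ)

lemma acycOr_raiseTo (h𝕀 : IsIntervalHypergraph n 𝕀) {μ j : ℕ} (hμj : μ ≤ j) :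
    AcycOr 𝕀 (raiseTo μ j) := by
  have hmin : ∀ J : Edge 𝕀, sInf (J.1 : Set ℕ) ∈ J.1 := fun J =>
    Nat.sInf_mem (Finset.coe_nonempty.mpr (h𝕀.nonempty J))
  refine ⟨fun J => ?_, ?_⟩
  · unfold raiseTo
    split_ifs with hc
    exacts [hc.1, hmin J]
  -- `j` is moved just below `μ` in the order of `ℕ`
  refine isAcyclic_of_rank (fun x => if x = j then μ else if x < μ then x else x + 1) ?_
  intro J h hh hne
  by_cases hc : j ∈ J.1 ∧ ∀ x ∈ J.1, μ ≤ x
  · rw [raiseTo, if_pos hc] at hne ⊢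
    have := hc.2 h hh
    split_ifs <;> omega
  · rw [raiseTo, if_neg hc] at hne ⊢
    have hlt := Ne.lt_of_le' hne (Nat.sInf_le hh)
    by_cases hhj : h = j
    · push Not at hc
      obtain ⟨x, hx, hxμ⟩ := hc (hhj ▸ hh)
      have := Nat.sInf_le hx
      split_ifs <;> omega
    · split_ifs <;> omega

lemma raiseTo_le {B : Edge 𝕀 → ℕ} (hB : AcycOr 𝕀 B) (h𝕀 : IsIntervalHypergraph n 𝕀)
    {μ : ℕ} {H₁ : Edge 𝕀} (hμ : μ ∈ H₁.1) (J : Edge 𝕀) : raiseTo μ (B H₁) J ≤ B J := by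
  unfold raiseTo
  split_ifs with hc
  · by_contra! hlt
    have hJH₁ : B J ∈ H₁.1 := h𝕀.mem_of_le_of_le H₁ hμ (hB.1 H₁) (hc.2 _ (hB.1 J)) hlt.le
    exact hlt.ne' (hB.2.eq_of_mem hc.1 hJH₁)
  · exact Nat.sInf_le (hB.1 J)

lemma exists_blocks_raiseTo_iff {μ j : ℕ} {H₁ : Edge 𝕀} (hμ : IsLeast (H₁.1 : Set ℕ) μ)
    (hj : j ∈ H₁.1) (I : Edge 𝕀) (m : ℕ) :
    (∃ J : Edge 𝕀, raiseTo μ j J ∈ I.1 ∧ Blocks (raiseTo μ j) m J) ↔ j ∈ I.1 ∧ μ ≤ m ∧ m < j := by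
  constructor
  · rintro ⟨J, hJ, ⟨z, hzJ, hzm⟩, hlt⟩
    unfold raiseTo at hJ hlt
    split_ifs at hJ hlt with hc
    · exact ⟨hJ, (hc.2 z hzJ).trans hzm, hlt⟩
    · exact absurd (Nat.sInf_le hzJ) (by omega)
  · rintro ⟨hjI, hμm, hmj⟩
    have hH₁ : raiseTo μ j H₁ = j := if_pos ⟨hj, hμ.2⟩
    exact ⟨H₁, by rwa [hH₁], ⟨μ, hμ.1, hμm⟩, by rwa [hH₁]⟩

lemma exists_lex_max_of_ne {A B : Edge 𝕀 → ℕ} (hne : A ≠ B) :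
    ∃ H₁, A H₁ ≠ B H₁ ∧ ∀ H, A H ≠ B H → A H < A H₁ ∨ A H = A H₁ ∧ B H ≤ B H₁ := by
  classical
  obtain ⟨H₀, h₀⟩ := Function.ne_iff.mp hne
  obtain ⟨H₁, hH₁, hmax⟩ := (𝕀.attach.filter fun H => A H ≠ B H).exists_max_image
    (fun H => toLex (A H, B H)) ⟨H₀, by simpa using h₀⟩
  exact ⟨H₁, (Finset.mem_filter.mp hH₁).2,
    fun H hH => Prod.Lex.toLex_le_toLex.mp (hmax H (by simpa using hH))⟩

section Disagreement

variable {A B : Edge 𝕀 → ℕ} {H₁ : Edge 𝕀}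

/-- On `I ∩ H₁` the orientation `A` disagrees with `B`, so lexicographic maximality of
`(A H₁, B H₁)` forces `A I = A H₁`. -/
lemma eq_of_mem_Ico (h𝕀 : IsIntervalHypergraph n 𝕀) (hcl : ClosedUnderIntersection 𝕀)
    (hA : AcycOr 𝕀 A) (hB : AcycOr 𝕀 B) (hle : ∀ H, A H ≤ B H)
    (hmax : ∀ H, A H ≠ B H → A H < A H₁ ∨ A H = A H₁ ∧ B H ≤ B H₁) {μ : ℕ} (hμ : μ ∈ H₁.1)
    {I : Edge 𝕀} (hjI : B H₁ ∈ I.1) (hμI : μ ≤ A I) (hIj : A I < B H₁) : A I = A H₁ := by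
  have hIH₁ : A I ∈ H₁.1 := h𝕀.mem_of_le_of_le H₁ hμ (hB.1 H₁) hμI hIj.le
  set K := hcl.inter I H₁ ⟨A I, Finset.mem_inter.mpr ⟨hA.1 I, hIH₁⟩⟩
  have hAK : A K = A I :=
    hA.eq_of_subset Finset.inter_subset_left (Finset.mem_inter.mpr ⟨hA.1 I, hIH₁⟩)
  have hBK : B K = B H₁ :=
    hB.eq_of_subset Finset.inter_subset_right (Finset.mem_inter.mpr ⟨hjI, hB.1 H₁⟩)
  have hIle : A I ≤ A H₁ := by have := hmax K (by omega); omega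
  have hH₁I : A H₁ ∈ I.1 := h𝕀.mem_of_le_of_le I (hA.1 I) hjI hIle (hle H₁)
  have hAK' : A K = A H₁ :=
    hA.eq_of_subset Finset.inter_subset_right (Finset.mem_inter.mpr ⟨hH₁I, hA.1 H₁⟩)
  omega

lemma join_raiseTo_eq_self (h𝕀 : IsIntervalHypergraph n 𝕀) (hcl : ClosedUnderIntersection 𝕀)
    (hA : AcycOr 𝕀 A) (hB : AcycOr 𝕀 B) (hle : ∀ H, A H ≤ B H)
    (hmax : ∀ H, A H ≠ B H → A H < A H₁ ∨ A H = A H₁ ∧ B H ≤ B H₁) {μ : ℕ}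
    (hμ : IsLeast (H₁.1 : Set ℕ) μ) {I : Edge 𝕀} (hI : ¬(A I = A H₁ ∧ B H₁ ∈ I.1)) :
    join ![A, raiseTo μ (B H₁)] I = A I := by
  refine le_antisymm (Nat.sInf_le ⟨hA.1 I, Fin.forall_fin_two.mpr ⟨?_, ?_⟩⟩)
    (le_join (f := ![A, raiseTo μ (B H₁)]) h𝕀 0 hA.1 I)
  · exact fun J hJ => hA.not_blocks_self h𝕀 hJ
  · intro J hJ hblock
    obtain ⟨hjI, hμI, hIj⟩ :=
      (exists_blocks_raiseTo_iff hμ (hB.1 H₁) I _).mp ⟨J, hJ, hblock⟩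
    exact hI ⟨eq_of_mem_Ico h𝕀 hcl hA hB hle hmax hμ.1 hjI hμI hIj, hjI⟩

lemma join_raiseTo_eq (h𝕀 : IsIntervalHypergraph n 𝕀) (hcl : ClosedUnderIntersection 𝕀)
    (hA : AcycOr 𝕀 A) (hB : AcycOr 𝕀 B) (hle : ∀ H, A H ≤ B H)
    (hmax : ∀ H, A H ≠ B H → A H < A H₁ ∨ A H = A H₁ ∧ B H ≤ B H₁) {μ : ℕ}
    (hμ : IsLeast (H₁.1 : Set ℕ) μ) {I : Edge 𝕀} (hAI : A I = A H₁) (hjI : B H₁ ∈ I.1) :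
    join ![A, raiseTo μ (B H₁)] I = B H₁ := by
  set f := ![A, raiseTo μ (B H₁)]
  have hμA : μ ≤ A H₁ := hμ.2 (hA.1 H₁)
  have hf : ∀ p, AcycOr 𝕀 (f p) :=
    Fin.forall_fin_two.mpr ⟨hA, acycOr_raiseTo h𝕀 (hμ.2 (hB.1 H₁))⟩
  have hupper : join f I ≤ B I :=
    join_le h𝕀 hcl hf hB (Fin.forall_fin_two.mpr ⟨hle, raiseTo_le hB h𝕀 hμ.1⟩) I
  have hBI : B I ≤ B H₁ := by have := hmax I; have := hle H₁; omega
  have hlower : A I ≤ join f I := le_join (f := f) h𝕀 0 hA.1 I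
  have hnot : ¬(μ ≤ join f I ∧ join f I < B H₁) := fun h => by
    obtain ⟨J, hJ, hblock⟩ := (exists_blocks_raiseTo_iff hμ (hB.1 H₁) I _).mpr ⟨hjI, h⟩
    exact not_blocks_join h𝕀 f 1 hJ hblock
  omega

end Disagreement

end Flip

section Order

variable {n : ℕ} {𝕀 : Finset (Finset ℕ)} {A B : Edge 𝕀 → ℕ}

theorem exists_flipStep_of_le (h𝕀 : IsIntervalHypergraph n 𝕀)
    (hcl : ClosedUnderIntersection 𝕀) (hA : AcycOr 𝕀 A) (hB : AcycOr 𝕀 B)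
    (hle : ∀ H, A H ≤ B H) (hne : A ≠ B) :
    ∃ A', FlipStep n 𝕀 A A' ∧ ∀ H, A' H ≤ B H := by
  obtain ⟨H₁, hne₁, hmax⟩ := exists_lex_max_of_ne hne
  set μ := H₁.1.min' (h𝕀.nonempty H₁)
  have hμ : IsLeast (H₁.1 : Set ℕ) μ := H₁.1.isLeast_min' _
  set f := ![A, raiseTo μ (B H₁)]
  have hf : ∀ p, AcycOr 𝕀 (f p) :=
    Fin.forall_fin_two.mpr ⟨hA, acycOr_raiseTo h𝕀 (hμ.2 (hB.1 H₁))⟩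
  have hflip : ∀ H, A H = A H₁ → B H₁ ∈ H.1 → join f H = B H₁ :=
    fun H => join_raiseTo_eq h𝕀 hcl hA hB hle hmax hμ
  have hkeep : ∀ H, ¬(A H = A H₁ ∧ B H₁ ∈ H.1) → join f H = A H :=
    fun H => join_raiseTo_eq_self h𝕀 hcl hA hB hle hmax hμ
  have hlt₁ : A H₁ < B H₁ := lt_of_le_of_ne (hle H₁) hne₁
  have hA₁ := Finset.mem_Icc.mp (h𝕀.subset_Icc H₁ (hA.1 H₁))
  have hB₁ := Finset.mem_Icc.mp (h𝕀.subset_Icc H₁ (hB.1 H₁))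
  refine ⟨join f, ⟨hA, ⟨join_mem h𝕀 f, join_isAcyclic h𝕀 f⟩, A H₁, B H₁, ?_, hA₁.1, hlt₁,
    hB₁.2, fun H => ⟨fun hH => ?_, fun hiH hjH => ⟨fun hAH => hflip H hAH hjH, fun hOH => ?_⟩⟩⟩,
    join_le h𝕀 hcl hf hB (Fin.forall_fin_two.mpr ⟨hle, raiseTo_le hB h𝕀 hμ.1⟩)⟩
  · intro h
    have := congrFun h H₁
    rw [hflip H₁ rfl (hB.1 H₁)] at this
    omega
  · by_cases hc : A H = A H₁ ∧ B H₁ ∈ H.1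
    · exact ⟨hc.1, hflip H hc.1 hc.2⟩
    · exact absurd (hkeep H hc).symm hH
  · by_contra hAH
    have hAHj : A H = B H₁ := (hkeep H fun hc => hAH hc.1) ▸ hOH
    have := hA.2.eq_of_mem (I := H) (J := H₁) hiH (hAHj ▸ hB.1 H₁)
    omega

lemma FlipStep.le {A' : Edge 𝕀 → ℕ} (h : FlipStep n 𝕀 A A') (H : Edge 𝕀) : A H ≤ A' H := by
  obtain ⟨-, -, i, j, -, -, hij, -, hflip⟩ := h
  by_cases he : A H = A' H
  · exact he.le
  · obtain ⟨h1, h2⟩ := (hflip H).1 he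
    omega

lemma FlipStep.ne {A' : Edge 𝕀 → ℕ} (h : FlipStep n 𝕀 A A') : A ≠ A' := by
  obtain ⟨-, -, -, -, hne, -⟩ := h
  exact hne

lemma le_of_leP (h : leP n 𝕀 A B) (H : Edge 𝕀) : A H ≤ B H := by
  induction h with
  | refl => exact le_rfl
  | tail _ hstep ih => exact ih.trans (hstep.le H)

theorem leP_of_le (h𝕀 : IsIntervalHypergraph n 𝕀) (hcl : ClosedUnderIntersection 𝕀)
    {A B : Edge 𝕀 → ℕ} (hA : AcycOr 𝕀 A) (hB : AcycOr 𝕀 B) (hle : ∀ H, A H ≤ B H) :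
    leP n 𝕀 A B := by
  by_cases hAB : A = B
  · exact hAB ▸ Relation.ReflTransGen.refl
  obtain ⟨A', hstep, hA'B⟩ := exists_flipStep_of_le h𝕀 hcl hA hB hle hAB
  exact Relation.ReflTransGen.head hstep (leP_of_le h𝕀 hcl hstep.2.1 hB hA'B)
termination_by ∑ H ∈ 𝕀.attach, (B H - A H)
decreasing_by
  obtain ⟨H₀, hH₀⟩ := Function.ne_iff.mp hstep.ne
  refine Finset.sum_lt_sum (fun H _ => Nat.sub_le_sub_left (hstep.le H) _)
    ⟨H₀, Finset.mem_attach _ _, ?_⟩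
  have := hstep.le H₀
  have := hA'B H₀
  omega

end Order

theorem stmt13_general (n : ℕ) (𝕀 : Finset (Finset ℕ))
    (h𝕀 : IsIntervalHypergraph n 𝕀) (hcl : ClosedUnderIntersection 𝕀)
    (q : ℕ) (A : Fin q → Edge 𝕀 → ℕ) (hA : ∀ p, AcycOr 𝕀 (A p)) :
    ∃ O : Edge 𝕀 → ℕ,
      (∀ H : Edge 𝕀, IsLeast {m | m ∈ H.1 ∧ ∀ (p : Fin q) (J : Edge 𝕀),
        A p J ∈ H.1 → ¬((∃ x ∈ J.1, x ≤ m) ∧ m < A p J)} (O H)) ∧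
      AcycOr 𝕀 O ∧ (∀ p, leP n 𝕀 (A p) O) ∧
      ∀ C, AcycOr 𝕀 C → (∀ p, leP n 𝕀 (A p) C) → leP n 𝕀 O C := by
  have hO : AcycOr 𝕀 (join A) := ⟨join_mem h𝕀 A, join_isAcyclic h𝕀 A⟩
  refine ⟨join A, join_isLeast h𝕀 A, hO, fun p => ?_, fun C hC hAC => ?_⟩
  · exact leP_of_le h𝕀 hcl (hA p) hO (le_join h𝕀 p (hA p).1)
  · exact leP_of_le h𝕀 hcl hO hC (join_le h𝕀 hcl hA hC fun p => le_of_leP (hAC p))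

/-- For an interval hypergraph `𝕀` closed under intersection and
acyclic orientations `A_1, …, A_q`, the orientation `O` defined by
`O(I) = min (I \ ⋃_p ⋃ {[min J, A_p(J)) : J ∈ 𝕀, A_p(J) ∈ I})` is acyclic and is the
least upper bound of `{A_1, …, A_q}` in `P_𝕀`. -/
theorem stmt13 (n : ℕ) (hn : 1 ≤ n) (𝕀 : Finset (Finset ℕ))
    (h𝕀 : IsIntervalHypergraph n 𝕀) (hcl : ClosedUnderIntersection 𝕀)
    (q : ℕ) (hq : 1 ≤ q) (A : Fin q → Edge 𝕀 → ℕ) (hA : ∀ p, AcycOr 𝕀 (A p)) :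
    ∃ O : Edge 𝕀 → ℕ,
      (∀ H : Edge 𝕀, IsLeast {m | m ∈ H.1 ∧ ∀ (p : Fin q) (J : Edge 𝕀),
        A p J ∈ H.1 → ¬((∃ x ∈ J.1, x ≤ m) ∧ m < A p J)} (O H)) ∧
      AcycOr 𝕀 O ∧ (∀ p, leP n 𝕀 (A p) O) ∧
      ∀ C, AcycOr 𝕀 C → (∀ p, leP n 𝕀 (A p) C) → leP n 𝕀 O C :=
  stmt13_general n 𝕀 h𝕀 hcl q A hA

end IHL
end

section
/- Let 𝕀 be an interval hypergraph on [n] that is closed under intersection. Then for all i, j ∈ 𝒥_𝕀, A_i ≤ A_j in the hypergraphic poset P_𝕀 if and only if J_i = J_j and i ≤ j. -/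
namespace IHL

/-!
Every increasing flip raises the values of an orientation, so `A_i ≤ A_j` gives
`i = A_i(J_i) ≤ A_j(J_i)`; since `J_i` is an edge (closure under intersection) and
`A_j(J_i) = min J_i < i` otherwise, this forces `j ∈ J_i` and `μ_i = μ_j`, and then the edges
defining `J_i` and `J_j` coincide. Conversely, if `J_i = J_j` and `i < j`, an edge with minimum
`μ` contains `i` iff it contains `j`, and `A_i`, `A_j` differ exactly on these edges, where
one passes from one to the other by a single increasing flip `i → j`.
-/

section

variable {n : ℕ} {𝕀 : Finset (Finset ℕ)}

lemma IsIntervalHypergraph.mem_of_le_of_le_s14 (h𝕀 : IsIntervalHypergraph n 𝕀) {I : Finset ℕ}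
    (hI : I ∈ 𝕀) {a b c : ℕ} (ha : a ∈ I) (hc : c ∈ I) (hab : a ≤ b) (hbc : b ≤ c) : b ∈ I := by
  obtain ⟨_, _, _, _, _, rfl⟩ := h𝕀.1 I hI
  simp only [Finset.mem_Icc] at *
  omega

lemma IsIntervalHypergraph.le_of_mem (h𝕀 : IsIntervalHypergraph n 𝕀) {I : Finset ℕ}
    (hI : I ∈ 𝕀) {x : ℕ} (hx : x ∈ I) : x ≤ n := by
  obtain ⟨_, _, _, _, _, rfl⟩ := h𝕀.1 I hI
  simp only [Finset.mem_Icc] at hx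
  omega

lemma ClosedUnderIntersection.inf'_mem (hcl : ClosedUnderIntersection 𝕀)
    {s : Finset (Finset ℕ)} (hs : s ⊆ 𝕀) (hne : s.Nonempty) {x : ℕ} (hx : ∀ I ∈ s, x ∈ I) :
    s.inf' hne id ∈ 𝕀 := by
  have h : s.inf' hne id ∈ 𝕀 ∧ x ∈ s.inf' hne id := by
    refine Finset.inf'_induction hne id (p := fun I => I ∈ 𝕀 ∧ x ∈ I) ?_
      fun I hI => ⟨hs hI, hx I hI⟩
    rintro I ⟨hI, hxI⟩ J ⟨hJ, hxJ⟩
    have hxIJ : x ∈ I ∩ J := Finset.mem_inter.2 ⟨hxI, hxJ⟩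
    exact ⟨hcl I hI J hJ ⟨x, hxIJ⟩, hxIJ⟩
  exact h.1

lemma leP.apply_le {A B : Edge 𝕀 → ℕ} (h : leP n 𝕀 A B) (H : Edge 𝕀) : A H ≤ B H := by
  induction h with
  | refl => exact le_rfl
  | @tail B C _ step ih =>
    obtain ⟨-, -, i, j, -, -, hij, -, hflip⟩ := step
    refine ih.trans ?_
    by_cases hH : B H = C H
    · exact hH.le
    · obtain ⟨h₁, h₂⟩ := (hflip H).1 hH
      omega

lemma isAcyclic_of_potential {O : Edge 𝕀 → ℕ} (g : ℕ → ℕ)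
    (hg : ∀ H : Edge 𝕀, ∀ b ∈ H.1, b ≠ O H → g (O H) < g b) : IsAcyclic 𝕀 O := by
  rintro ⟨k, H, hk, hHk, hstep⟩
  have hgrow : ∀ p ≤ k, g (O (H 0)) + p ≤ g (O (H p)) := by
    intro p
    induction p with
    | zero => simp
    | succ p ih =>
      intro hp
      have := hg (H p) _ (hstep p (by omega)).1 (hstep p (by omega)).2
      have := ih (by omega)
      omega
  have := hgrow k le_rfl
  rw [hHk] at this
  omega

namespace IsJj

variable {i j : ℕ} {Ji Jj : Finset ℕ}

lemma mem_self (hJ : IsJj 𝕀 j Jj) : j ∈ Jj :=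
  (hJ j).2 fun _ _ hj _ => hj

lemma subset (hJ : IsJj 𝕀 j Jj) {I : Finset ℕ} (hI : I ∈ 𝕀) (hj : j ∈ I)
    (hy : ∃ y ∈ I, y < j) : Jj ⊆ I :=
  fun x hx => (hJ x).1 hx I hI hj hy

lemma lt_of_isLeast (h𝕀 : IsIntervalHypergraph n 𝕀) (hjJ : InJI 𝕀 j) (hJ : IsJj 𝕀 j Jj)
    {μ : ℕ} (hμ : IsLeast (Jj : Set ℕ) μ) : μ < j := by
  have hpred : j - 1 ∈ Jj := (hJ _).2 fun I hI hj ⟨y, hy, hyj⟩ =>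
    h𝕀.mem_of_le_of_le_s14 hI hy hj (by omega) (by omega)
  have := hμ.2 hpred
  obtain ⟨_, _, _, y, _, hyj⟩ := hjJ
  omega

lemma mem (hcl : ClosedUnderIntersection 𝕀) (hjJ : InJI 𝕀 j) (hJ : IsJj 𝕀 j Jj) :
    Jj ∈ 𝕀 := by
  classical
  set s := 𝕀.filter fun I => j ∈ I ∧ ∃ y ∈ I, y < j
  obtain ⟨I, hI, hjI, hy⟩ := hjJ
  have hne : s.Nonempty := ⟨I, Finset.mem_filter.2 ⟨hI, hjI, hy⟩⟩
  have hJs : Jj = s.inf' hne id := by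
    ext x
    rw [hJ x, ← Finset.singleton_subset_iff, Finset.le_inf'_iff]
    simp [s]
  rw [hJs]
  exact hcl.inf'_mem (Finset.filter_subset _ _) hne fun I hI => (Finset.mem_filter.1 hI).2.1

lemma eq_of_mem_of_le (h𝕀 : IsIntervalHypergraph n 𝕀) (hJi : IsJj 𝕀 i Ji) (hJj : IsJj 𝕀 j Jj)
    {μ : ℕ} (hμi : IsLeast (Ji : Set ℕ) μ) (hμj : IsLeast (Jj : Set ℕ) μ) (hμ : μ < i)
    (hij : i ≤ j) (hj : j ∈ Ji) : Ji = Jj := by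
  ext x
  rw [hJi x, hJj x]
  constructor
  · intro hx I hI hjI hy
    have hμI : μ ∈ I := hJj.subset hI hjI hy hμj.1
    exact hx I hI (h𝕀.mem_of_le_of_le_s14 hI hμI hjI (hμi.2 hJi.mem_self) hij) ⟨μ, hμI, hμ⟩
  · rintro hx I hI hiI ⟨y, hyI, hy⟩
    exact hx I hI (hJi.subset hI hiI ⟨y, hyI, hy⟩ hj) ⟨y, hyI, by omega⟩

end IsJj

namespace IsAj

variable {j μ : ℕ} {A : Edge 𝕀 → ℕ}

lemma isOrientation (hA : IsAj 𝕀 j μ A) : IsOrientation 𝕀 A := by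
  intro H
  by_cases hH : j ∈ H.1 ∧ IsLeast (H.1 : Set ℕ) μ
  · exact (hA H).1 hH ▸ hH.1
  · exact ((hA H).2 hH).1

lemma unique {B : Edge 𝕀 → ℕ} (hA : IsAj 𝕀 j μ A) (hB : IsAj 𝕀 j μ B) : A = B := by
  funext H
  by_cases hH : j ∈ H.1 ∧ IsLeast (H.1 : Set ℕ) μ
  · rw [(hA H).1 hH, (hB H).1 hH]
  · exact ((hA H).2 hH).unique ((hB H).2 hH)

/-- `A_j` orients every edge towards its minimum for the order of `ℕ` in which `j` is moved
to just after `μ_j`. -/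
lemma isAcyclic (hμj : μ < j) (hμ : ∀ H ∈ 𝕀, j ∈ H → (∃ y ∈ H, y < j) → μ ∈ H)
    (hA : IsAj 𝕀 j μ A) : IsAcyclic 𝕀 A := by
  refine isAcyclic_of_potential (fun x => if x = j then 2 * μ + 1 else 2 * x + 2) ?_
  intro H b hb hbA
  by_cases hH : j ∈ H.1 ∧ IsLeast (H.1 : Set ℕ) μ
  · have hAH := (hA H).1 hH
    have := hH.2.2 hb
    simp only [hAH] at hbA ⊢
    simp only [if_true, if_neg hbA]
    omega
  · have hAH := (hA H).2 hH
    have hAb : A H < b := lt_of_le_of_ne (hAH.2 hb) hbA.symm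
    by_cases hbj : b = j
    · subst hbj
      have hμH : μ ∈ H.1 := hμ H.1 H.2 hb ⟨A H, hAH.1, hAb⟩
      have hAμ : A H ≠ μ := fun h => hH ⟨hb, h ▸ hAH⟩
      have := hAH.2 hμH
      simp only [if_neg hAb.ne, if_pos]
      omega
    · simp only [if_neg hbj]
      split_ifs <;> omega

lemma acycOr (h𝕀 : IsIntervalHypergraph n 𝕀) {Jj : Finset ℕ} (hjJ : InJI 𝕀 j)
    (hJ : IsJj 𝕀 j Jj) (hμ : IsLeast (Jj : Set ℕ) μ) (hA : IsAj 𝕀 j μ A) : AcycOr 𝕀 A :=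
  ⟨hA.isOrientation, hA.isAcyclic (hJ.lt_of_isLeast h𝕀 hjJ hμ)
    fun _ hH hj hy => hJ.subset hH hj hy hμ.1⟩

end IsAj

lemma isIncFlip_of_isAj (h𝕀 : IsIntervalHypergraph n 𝕀) {i j μ : ℕ} {J : Finset ℕ}
    (hJ𝕀 : J ∈ 𝕀) (hJi : IsJj 𝕀 i J) (hJj : IsJj 𝕀 j J) (hμ : IsLeast (J : Set ℕ) μ)
    (hμi : μ < i) (hij : i < j) {Ai Aj : Edge 𝕀 → ℕ} (hAi : IsAj 𝕀 i μ Ai)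
    (hAj : IsAj 𝕀 j μ Aj) : IsIncFlip n 𝕀 i j Ai Aj := by
  have hroot : ∀ H : Edge 𝕀,
      (i ∈ H.1 ∧ IsLeast (H.1 : Set ℕ) μ) ↔ (j ∈ H.1 ∧ IsLeast (H.1 : Set ℕ) μ) := by
    intro H
    constructor
    · rintro ⟨hiH, hμH⟩
      exact ⟨hJi.subset H.2 hiH ⟨μ, hμH.1, hμi⟩ hJj.mem_self, hμH⟩
    · rintro ⟨hjH, hμH⟩
      exact ⟨h𝕀.mem_of_le_of_le_s14 H.2 hμH.1 hjH hμi.le hij.le, hμH⟩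
  have hAiJ : Ai ⟨J, hJ𝕀⟩ = i := (hAi _).1 ⟨hJi.mem_self, hμ⟩
  have hAjJ : Aj ⟨J, hJ𝕀⟩ = j := (hAj _).1 ⟨hJj.mem_self, hμ⟩
  refine ⟨fun h => hij.ne (hAiJ.symm.trans ((congrFun h _).trans hAjJ)), by omega, hij,
    h𝕀.le_of_mem hJ𝕀 hJj.mem_self, fun H => ?_⟩
  by_cases hH : i ∈ H.1 ∧ IsLeast (H.1 : Set ℕ) μ
  · have e₁ := (hAi H).1 hH
    have e₂ := (hAj H).1 ((hroot H).1 hH)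
    exact ⟨fun _ => ⟨e₁, e₂⟩, fun _ _ => iff_of_true e₁ e₂⟩
  · have e₁ := (hAi H).2 hH
    have e₂ := (hAj H).2 (mt (hroot H).2 hH)
    refine ⟨fun hne => absurd (e₁.unique e₂) hne, fun hiH hjH => ?_⟩
    have := e₁.2 (hJj.subset H.2 hjH ⟨i, hiH, hij⟩ hμ.1)
    have := e₂.2 hiH
    exact iff_of_false (by omega) (by omega)

end

theorem stmt14_general (n : ℕ) (𝕀 : Finset (Finset ℕ))
    (h𝕀 : IsIntervalHypergraph n 𝕀) (hcl : ClosedUnderIntersection 𝕀)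
    (i j : ℕ) (hiJ : InJI 𝕀 i) (hjJ : InJI 𝕀 j)
    (Ji Jj : Finset ℕ) (hJi : IsJj 𝕀 i Ji) (hJj : IsJj 𝕀 j Jj)
    (μi μj : ℕ) (hμi : IsLeast (Ji : Set ℕ) μi) (hμj : IsLeast (Jj : Set ℕ) μj)
    (Ai Aj : Edge 𝕀 → ℕ) (hAi : IsAj 𝕀 i μi Ai) (hAj : IsAj 𝕀 j μj Aj) :
    leP n 𝕀 Ai Aj ↔ (Ji = Jj ∧ i ≤ j) := by
  have hJi𝕀 : Ji ∈ 𝕀 := hJi.mem hcl hiJ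
  have hμi_lt : μi < i := hJi.lt_of_isLeast h𝕀 hiJ hμi
  have hAiJi : Ai ⟨Ji, hJi𝕀⟩ = i := (hAi _).1 ⟨hJi.mem_self, hμi⟩
  constructor
  · intro hle
    have hi_le : i ≤ Aj ⟨Ji, hJi𝕀⟩ := hAiJi ▸ hle.apply_le _
    by_cases hJ : j ∈ Ji ∧ IsLeast (Ji : Set ℕ) μj
    · have hij : i ≤ j := (hAj ⟨Ji, hJi𝕀⟩).1 hJ ▸ hi_le
      obtain rfl : μi = μj := hμi.unique hJ.2
      exact ⟨hJi.eq_of_mem_of_le h𝕀 hJj hμi hμj hμi_lt hij hJ.1, hij⟩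
    · have := ((hAj ⟨Ji, hJi𝕀⟩).2 hJ).unique hμi
      omega
  · rintro ⟨rfl, hij⟩
    obtain rfl : μi = μj := hμi.unique hμj
    rcases hij.eq_or_lt with rfl | hlt
    · exact hAi.unique hAj ▸ .refl
    · exact .single ⟨hAi.acycOr h𝕀 hiJ hJi hμi, hAj.acycOr h𝕀 hjJ hJj hμj, i, j,
        isIncFlip_of_isAj h𝕀 hJi𝕀 hJi hJj hμi hμi_lt hlt hAi hAj⟩

/-- For an interval hypergraph `𝕀` closed under intersection and
`i, j ∈ 𝒥_𝕀`, one has `A_i ≤ A_j` in `P_𝕀` iff `J_i = J_j` and `i ≤ j`. -/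
theorem stmt14 (n : ℕ) (hn : 1 ≤ n) (𝕀 : Finset (Finset ℕ))
    (h𝕀 : IsIntervalHypergraph n 𝕀) (hcl : ClosedUnderIntersection 𝕀)
    (i j : ℕ) (hiJ : InJI 𝕀 i) (hjJ : InJI 𝕀 j)
    (Ji Jj : Finset ℕ) (hJi : IsJj 𝕀 i Ji) (hJj : IsJj 𝕀 j Jj)
    (μi μj : ℕ) (hμi : IsLeast (Ji : Set ℕ) μi) (hμj : IsLeast (Jj : Set ℕ) μj)
    (Ai Aj : Edge 𝕀 → ℕ) (hAi : IsAj 𝕀 i μi Ai) (hAj : IsAj 𝕀 j μj Aj) :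
    leP n 𝕀 Ai Aj ↔ (Ji = Jj ∧ i ≤ j) :=
  stmt14_general n 𝕀 h𝕀 hcl i j hiJ hjJ Ji Jj hJi hJj μi μj hμi hμj Ai Aj hAi hAj
end IHL
end
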